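/- arXiv:math/0612083 — 2 statements merged into one kernel-verified Lean document; each statement's English description precedes it below -/
import Mathlib

section
/- Interpretation triples form a product category (a PRO) with the natural numbers as objects: (1) the composite and the tensor of interpretation triples are again interpretation triples (their three components are monotone); (2) composition is associative and the identity triples are two-sided units for it; (3) the tensor of the identity triples on m and on n is the identity triple on m + n, and the tensor is associative and has the identity triple on 0 as unit (under the canonical identifications of Fin (m+p) with the concatenation of Fin m and Fin p); (4) the interchange law holds: (f' ∘ f) ⊗ (g' ∘ g) = (f' ⊗ g') ∘ (f ⊗ g) for all interpretation triples f from m to n, f' from n to p, g from m' to n', g' from n' to p'. -/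
/-! Two triples are equal as soon as their three components agree, so every law is an identity of
functions: the current maps compose and concatenate like ordinary functions, and the heats
reduce to associativity, commutativity and the unit law of `+` in `M`. -/

set_option linter.unusedVariables false

/-- An interpretation triple from `m` to `n`: a monotone covariant current map,
a monotone contravariant current map, and a monotone heat map. -/
structure ITriple (X Y M : Type*) [Preorder X] [Preorder Y] [Preorder M]
    (m n : ℕ) where
  cov : (Fin m → X) → (Fin n → X)
  contra : (Fin n → Y) → (Fin m → Y)
  heat : (Fin m → X) × (Fin n → Y) → M
  cov_mono : Monotone cov
  contra_mono : Monotone contra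
  heat_mono : Monotone heat

private lemma append_mono {α : Type*} [Preorder α] {m p : ℕ}
    {a a' : Fin m → α} {b b' : Fin p → α} (ha : a ≤ a') (hb : b ≤ b') :
    Fin.append a b ≤ Fin.append a' b' := by
  intro i
  refine Fin.addCases (fun j => ?_) (fun j => ?_) i
  · simpa using ha j
  · simpa using hb j

variable {X Y M : Type*} [Preorder X] [Preorder Y] [AddCommMonoid M] [PartialOrder M]
    [IsOrderedAddMonoid M]

/-- Composition of interpretation triples: `g.comp f` is `g` after `f`. -/
def ITriple.comp {m n p : ℕ} (g : ITriple X Y M n p) (f : ITriple X Y M m n) :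
    ITriple X Y M m p where
  cov := g.cov ∘ f.cov
  contra := f.contra ∘ g.contra
  heat := fun xy => f.heat (xy.1, g.contra xy.2) + g.heat (f.cov xy.1, xy.2)
  cov_mono := g.cov_mono.comp f.cov_mono
  contra_mono := f.contra_mono.comp g.contra_mono
  heat_mono := fun a b hab =>
    add_le_add
      (f.heat_mono (Prod.mk_le_mk.mpr ⟨hab.1, g.contra_mono hab.2⟩))
      (g.heat_mono (Prod.mk_le_mk.mpr ⟨f.cov_mono hab.1, hab.2⟩))

/-- The tensor product of interpretation triples, acting componentwise on
concatenated tuples, with heats added. -/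
def ITriple.tensor {m n p q : ℕ} (f : ITriple X Y M m n) (g : ITriple X Y M p q) :
    ITriple X Y M (m + p) (n + q) where
  cov := fun x => Fin.append (f.cov (x ∘ Fin.castAdd p)) (g.cov (x ∘ Fin.natAdd m))
  contra := fun y => Fin.append (f.contra (y ∘ Fin.castAdd q)) (g.contra (y ∘ Fin.natAdd n))
  heat := fun xy =>
    f.heat (xy.1 ∘ Fin.castAdd p, xy.2 ∘ Fin.castAdd q) +
      g.heat (xy.1 ∘ Fin.natAdd m, xy.2 ∘ Fin.natAdd n)
  cov_mono := fun x x' hx =>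
    append_mono (f.cov_mono fun j => hx _) (g.cov_mono fun j => hx _)
  contra_mono := fun y y' hy =>
    append_mono (f.contra_mono fun j => hy _) (g.contra_mono fun j => hy _)
  heat_mono := fun a b hab =>
    add_le_add
      (f.heat_mono (Prod.mk_le_mk.mpr ⟨fun j => hab.1 _, fun j => hab.2 _⟩))
      (g.heat_mono (Prod.mk_le_mk.mpr ⟨fun j => hab.1 _, fun j => hab.2 _⟩))

/-- The identity interpretation triple on `n`: identity current maps and zero heat. -/
def ITriple.id (n : ℕ) : ITriple X Y M n n where
  cov := _root_.id
  contra := _root_.id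
  heat := fun _ => 0
  cov_mono := monotone_id
  contra_mono := monotone_id
  heat_mono := monotone_const


theorem Fin.cast_add_assoc_comp_natAdd (m p r : ℕ) :
    Fin.cast (Nat.add_assoc m p r) ∘ Fin.natAdd (m + p) = Fin.natAdd m ∘ Fin.natAdd p :=
  funext fun i => Fin.ext (Nat.add_assoc m p i)

namespace ITriple

@[ext]
theorem ext {X Y M : Type*} [Preorder X] [Preorder Y] [Preorder M] {m n : ℕ}
    {f g : ITriple X Y M m n} (hcov : f.cov = g.cov) (hcontra : f.contra = g.contra)
    (hheat : f.heat = g.heat) : f = g := by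
  cases f; cases g; congr

theorem heq_of_cast {X Y M : Type*} [Preorder X] [Preorder Y] [Preorder M]
    {m n m' n' : ℕ} (hm : m = m') (hn : n = n')
    {f : ITriple X Y M m n} {g : ITriple X Y M m' n'}
    (hcov : ∀ x, f.cov (x ∘ Fin.cast hm) = g.cov x ∘ Fin.cast hn)
    (hcontra : ∀ y, f.contra (y ∘ Fin.cast hn) = g.contra y ∘ Fin.cast hm)
    (hheat : ∀ x y, f.heat (x ∘ Fin.cast hm, y ∘ Fin.cast hn) = g.heat (x, y)) :
    HEq f g := by
  subst hm hn
  exact heq_of_eq (ext (funext hcov) (funext hcontra) (funext fun xy => hheat xy.1 xy.2))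

theorem comp_assoc {m n p q : ℕ} (f : ITriple X Y M m n) (g : ITriple X Y M n p)
    (h : ITriple X Y M p q) : (h.comp g).comp f = h.comp (g.comp f) :=
  ext rfl rfl (funext fun _ => (add_assoc _ _ _).symm)

theorem comp_id {m n : ℕ} (f : ITriple X Y M m n) : f.comp (ITriple.id m) = f :=
  ext rfl rfl (funext fun _ => zero_add _)

theorem id_comp {m n : ℕ} (f : ITriple X Y M m n) : (ITriple.id n).comp f = f :=
  ext rfl rfl (funext fun _ => add_zero _)

theorem id_tensor_id (m n : ℕ) :
    (ITriple.id m : ITriple X Y M m m).tensor (ITriple.id n) = ITriple.id (m + n) :=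
  ext (funext fun _ => Fin.append_castAdd_natAdd) (funext fun _ => Fin.append_castAdd_natAdd)
    (funext fun _ => add_zero 0)

theorem tensor_assoc {m n p q r s : ℕ} (f : ITriple X Y M m n) (g : ITriple X Y M p q)
    (h : ITriple X Y M r s) : HEq ((f.tensor g).tensor h) (f.tensor (g.tensor h)) := by
  refine heq_of_cast (Nat.add_assoc m p r) (Nat.add_assoc n q s)
    (fun x => ?_) (fun y => ?_) (fun x y => ?_)
  -- the reindexings through `Fin.castAdd` that remain agree up to proofs, hence definitionally
  · simp only [tensor, Fin.append_assoc, Function.comp_assoc, Fin.cast_add_assoc_comp_natAdd]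
    rfl
  · simp only [tensor, Fin.append_assoc, Function.comp_assoc, Fin.cast_add_assoc_comp_natAdd]
    rfl
  · simp only [tensor, Function.comp_assoc, Fin.cast_add_assoc_comp_natAdd]
    exact add_assoc _ _ _

theorem tensor_id_zero {m n : ℕ} (f : ITriple X Y M m n) : HEq (f.tensor (ITriple.id 0)) f := by
  refine heq_of_cast (Nat.add_zero m) (Nat.add_zero n) (fun x => ?_) (fun y => ?_) (fun x y => ?_)
  · exact Fin.append_right_nil _ _ rfl
  · exact Fin.append_right_nil _ _ rfl
  · exact add_zero _

theorem id_zero_tensor {m n : ℕ} (f : ITriple X Y M m n) :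
    HEq ((ITriple.id 0 : ITriple X Y M 0 0).tensor f) f := by
  refine heq_of_cast (Nat.zero_add m) (Nat.zero_add n) (fun x => ?_) (fun y => ?_) (fun x y => ?_)
  · simp only [tensor, Fin.append_left_nil _ _ rfl, Fin.natAdd_zero]
    rfl
  · simp only [tensor, Fin.append_left_nil _ _ rfl, Fin.natAdd_zero]
    rfl
  · simp only [tensor, Fin.natAdd_zero]
    exact zero_add _

theorem comp_tensor_comp {m n p m' n' p' : ℕ} (f : ITriple X Y M m n)
    (f' : ITriple X Y M n p) (g : ITriple X Y M m' n') (g' : ITriple X Y M n' p') :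
    (f'.comp f).tensor (g'.comp g) = (f'.tensor g').comp (f.tensor g) := by
  ext1 <;> funext _ <;>
    simp only [tensor, comp, Function.comp_def, Fin.append_left, Fin.append_right]
  exact add_add_add_comm _ _ _ _

end ITriple

theorem iTriple_product_category_general :
    -- (1) composites and tensors are interpretation triples: their components are monotone
    (∀ (m n p : ℕ) (f : ITriple X Y M m n) (g : ITriple X Y M n p),
      Monotone (g.comp f).cov ∧ Monotone (g.comp f).contra ∧ Monotone (g.comp f).heat) ∧
    (∀ (m n p q : ℕ) (f : ITriple X Y M m n) (g : ITriple X Y M p q),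
      Monotone (f.tensor g).cov ∧ Monotone (f.tensor g).contra ∧ Monotone (f.tensor g).heat) ∧
    -- (2) composition is associative and unital
    (∀ (m n p q : ℕ) (f : ITriple X Y M m n) (g : ITriple X Y M n p)
        (h : ITriple X Y M p q),
      (h.comp g).comp f = h.comp (g.comp f)) ∧
    (∀ (m n : ℕ) (f : ITriple X Y M m n),
      f.comp (ITriple.id m) = f ∧ (ITriple.id n).comp f = f) ∧
    -- (3) tensor of identities, associativity and unitality of the tensor
    (∀ m n : ℕ,
      (ITriple.id m : ITriple X Y M m m).tensor (ITriple.id n) = ITriple.id (m + n)) ∧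
    (∀ (m n p q r s : ℕ) (f : ITriple X Y M m n) (g : ITriple X Y M p q)
        (h : ITriple X Y M r s),
      HEq ((f.tensor g).tensor h) (f.tensor (g.tensor h))) ∧
    (∀ (m n : ℕ) (f : ITriple X Y M m n),
      HEq (f.tensor (ITriple.id 0)) f ∧ HEq ((ITriple.id 0 : ITriple X Y M 0 0).tensor f) f) ∧
    -- (4) the interchange law
    (∀ (m n p m' n' p' : ℕ) (f : ITriple X Y M m n) (f' : ITriple X Y M n p)
        (g : ITriple X Y M m' n') (g' : ITriple X Y M n' p'),
      (f'.comp f).tensor (g'.comp g) = (f'.tensor g').comp (f.tensor g)) := by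
  exact ⟨fun _ _ _ f g => ⟨(g.comp f).cov_mono, (g.comp f).contra_mono, (g.comp f).heat_mono⟩,
    fun _ _ _ _ f g => ⟨(f.tensor g).cov_mono, (f.tensor g).contra_mono, (f.tensor g).heat_mono⟩,
    fun _ _ _ _ => ITriple.comp_assoc, fun _ _ f => ⟨f.comp_id, f.id_comp⟩,
    ITriple.id_tensor_id, fun _ _ _ _ _ _ => ITriple.tensor_assoc,
    fun _ _ f => ⟨f.tensor_id_zero, f.id_zero_tensor⟩, fun _ _ _ _ _ _ => ITriple.comp_tensor_comp⟩

/-- Interpretation triples form a product category (a PRO) with the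
natural numbers as objects: composites and tensors have monotone components,
composition is associative with the identity triples as units, the tensor of
identities is an identity, the tensor is associative and unital (up to the canonical
identifications, expressed via `HEq`), and the interchange law holds. -/
theorem iTriple_product_category
    (hadd : ∀ a b c : M, a < b → c + a < c + b) :
    -- (1) composites and tensors are interpretation triples: their components are monotone
    (∀ (m n p : ℕ) (f : ITriple X Y M m n) (g : ITriple X Y M n p),
      Monotone (g.comp f).cov ∧ Monotone (g.comp f).contra ∧ Monotone (g.comp f).heat) ∧
    (∀ (m n p q : ℕ) (f : ITriple X Y M m n) (g : ITriple X Y M p q),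
      Monotone (f.tensor g).cov ∧ Monotone (f.tensor g).contra ∧ Monotone (f.tensor g).heat) ∧
    -- (2) composition is associative and unital
    (∀ (m n p q : ℕ) (f : ITriple X Y M m n) (g : ITriple X Y M n p)
        (h : ITriple X Y M p q),
      (h.comp g).comp f = h.comp (g.comp f)) ∧
    (∀ (m n : ℕ) (f : ITriple X Y M m n),
      f.comp (ITriple.id m) = f ∧ (ITriple.id n).comp f = f) ∧
    -- (3) tensor of identities, associativity and unitality of the tensor
    (∀ m n : ℕ,
      (ITriple.id m : ITriple X Y M m m).tensor (ITriple.id n) = ITriple.id (m + n)) ∧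
    (∀ (m n p q r s : ℕ) (f : ITriple X Y M m n) (g : ITriple X Y M p q)
        (h : ITriple X Y M r s),
      HEq ((f.tensor g).tensor h) (f.tensor (g.tensor h))) ∧
    (∀ (m n : ℕ) (f : ITriple X Y M m n),
      HEq (f.tensor (ITriple.id 0)) f ∧ HEq ((ITriple.id 0 : ITriple X Y M 0 0).tensor f) f) ∧
    -- (4) the interchange law
    (∀ (m n p m' n' p' : ℕ) (f : ITriple X Y M m n) (f' : ITriple X Y M n p)
        (g : ITriple X Y M m' n') (g' : ITriple X Y M n' p'),
      (f'.comp f).tensor (g'.comp g) = (f'.tensor g').comp (f.tensor g)) :=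
  iTriple_product_category_general
end

section
/- Let F : L.Term ℕ → ℕ be any function; define u ≻ v on terms by: F(c[u]) > F(c[v]) for every one-hole context c, and define (u, i) ≽ (v, j) on pairs of a term and a natural number by: u ≻ v, or (u = v and i ≥ j). Then for every n-ary function symbol φ of L, all terms u₁, …, uₙ, v₁, …, vₙ and all positive natural numbers i₁, …, iₙ, j₁, …, jₙ such that (uₖ, iₖ) ≽ (vₖ, jₖ) for every k, the multiset (i₁ + ⋯ + iₙ) • {F(φ(u₁,…,uₙ))} is greater than or equal to the multiset (j₁ + ⋯ + jₙ) • {F(φ(v₁,…,vₙ))} in the reflexive closure of the Dershowitz–Manna order (i.e. the two multisets are equal or the latter is <DM the former). -/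
open FirstOrder FirstOrder.Language

/-- Number of occurrences of the hole variable `Sum.inr ()` in a term over `ℕ ⊕ Unit`. -/
def holeCount {L : Language} : L.Term (ℕ ⊕ Unit) → ℕ
  | Term.var (Sum.inl _) => 0
  | Term.var (Sum.inr _) => 1
  | Term.func _ ts => ∑ i, holeCount (ts i)

/-- Plugging the term `u` into the hole of a context `c`. -/
def plug {L : Language} (c : L.Term (ℕ ⊕ Unit)) (u : L.Term ℕ) : L.Term ℕ :=
  c.subst (Sum.elim Term.var fun _ => u)

/-- The order on terms induced by a measure `F`: `u ≻ v` iff `F (c[u]) > F (c[v])`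
for every one-hole context `c`. -/
def CtxGt {L : Language} (F : L.Term ℕ → ℕ) (u v : L.Term ℕ) : Prop :=
  ∀ c : L.Term (ℕ ⊕ Unit), holeCount c = 1 → F (plug c u) > F (plug c v)

/-- The lexicographic-style order on pairs of a term and a natural number:
`(u, i) ≽ (v, j)` iff `u ≻ v`, or `u = v` and `i ≥ j`. -/
def PairGe {L : Language} (F : L.Term ℕ → ℕ) (p q : L.Term ℕ × ℕ) : Prop :=
  CtxGt F p.1 q.1 ∨ (p.1 = q.1 ∧ p.2 ≥ q.2)

/-- The Dershowitz–Manna order on multisets: `s <DM t` iff `t = z + x`, `s = z + y`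
with `x` nonempty and every element of `y` strictly smaller than some element of `x`. -/
def IsDershowitzMannaLT (s t : Multiset ℕ) : Prop :=
  ∃ z x y : Multiset ℕ, x ≠ 0 ∧ t = z + x ∧ s = z + y ∧ ∀ b ∈ y, ∃ a ∈ x, b < a

lemma holeCount_relabel {L : Language} (t : L.Term ℕ) :
    holeCount (t.relabel Sum.inl) = 0 := by
  induction t with
  | var x => rfl
  | func f ts ih => simp [Term.relabel, holeCount, ih]

lemma plug_relabel {L : Language} (t : L.Term ℕ) (u : L.Term ℕ) :
    plug (t.relabel Sum.inl) u = t := by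
  induction t with
  | var x => rfl
  | func f ts ih => simp [Term.relabel, plug, Term.subst] at *; funext l; exact ih l

lemma ctxGt_step {L : Language} (F : L.Term ℕ → ℕ) {n : ℕ} (φ : L.Functions n)
    (w : Fin n → L.Term ℕ) (k : Fin n) {a b : L.Term ℕ} (hab : CtxGt F a b) :
    F (Term.func φ (fun l => if l = k then a else w l)) >
      F (Term.func φ (fun l => if l = k then b else w l)) := by
  have key : ∀ t : L.Term ℕ,
      plug (Term.func φ (fun l => if l = k then Term.var (Sum.inr ())
        else (w l).relabel Sum.inl)) t
        = Term.func φ (fun l => if l = k then t else w l) := by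
    intro t
    simp only [plug, Term.subst]
    congr 1
    funext l
    by_cases hl : l = k
    · simp [hl]
    · simp only [if_neg hl]
      exact plug_relabel (w l) t
  have hc : holeCount (Term.func φ (fun l => if l = k then Term.var (Sum.inr ())
      else (w l).relabel Sum.inl)) = 1 := by
    simp only [holeCount]
    rw [Finset.sum_congr rfl (g := fun l => if l = k then 1 else 0)]
    · simp
    · intro l _
      by_cases hl : l = k <;> simp [hl, holeCount, holeCount_relabel]
  have := hab _ hc
  rwa [key, key] at this

lemma ctxGt_chain {L : Language} (F : L.Term ℕ → ℕ) {n : ℕ} (φ : L.Functions n)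
    (u v : Fin n → L.Term ℕ)
    (h : ∀ k, u k = v k ∨ CtxGt F (u k) (v k))
    (k0 : Fin n) (hk0 : CtxGt F (u k0) (v k0)) :
    F (Term.func φ u) > F (Term.func φ v) := by
  set W : ℕ → Fin n → L.Term ℕ := fun m l => if (l : ℕ) < m then v l else u l with hW
  have main : ∀ m ≤ n, F (Term.func φ u) ≥ F (Term.func φ (W m)) ∧
      ((k0 : ℕ) < m → F (Term.func φ u) > F (Term.func φ (W m))) := by
    intro m
    induction m with
    | zero =>
      intro _
      have h0 : W 0 = u := by funext l; simp [hW]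
      rw [h0]
      exact ⟨le_refl _, by omega⟩
    | succ m ih =>
      intro hm
      have ihm := ih (by omega)
      set k : Fin n := ⟨m, by omega⟩ with hk
      have hkm : (k : ℕ) = m := rfl
      have h1 : W (m + 1) = fun l => if l = k then v k else W m l := by
        funext l
        by_cases hl : l = k
        · subst hl; simp [hW, hkm]
        · have hne : (l : ℕ) ≠ m := fun hval => hl (Fin.ext (hval.trans hkm.symm))
          simp only [hW, if_neg hl]
          by_cases h2 : (l : ℕ) < m
          · rw [if_pos h2, if_pos (by omega)]
          · rw [if_neg h2, if_neg (by omega)]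
      have h2 : W m = fun l => if l = k then u k else W m l := by
        funext l
        by_cases hl : l = k
        · subst hl; simp [hW, hkm]
        · simp [hl]
      rcases h k with heq | hgt
      · have hWeq : W (m + 1) = W m := by rw [h1, ← heq, ← h2]
        rw [hWeq]
        refine ⟨ihm.1, fun hlt => ?_⟩
        rcases Nat.lt_or_ge (k0 : ℕ) m with h3 | h3
        · exact ihm.2 h3
        · exfalso
          have hkk : k0 = k := Fin.ext (by rw [hkm]; omega)
          have huv : u k0 = v k0 := by rw [hkk]; exact heq
          exact lt_irrefl _ ((huv ▸ hk0) (Term.var (Sum.inr ())) rfl)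
      · have hstep := ctxGt_step F φ (W m) k hgt
        rw [← h2, ← h1] at hstep
        exact ⟨le_of_lt (lt_of_lt_of_le hstep ihm.1),
          fun _ => lt_of_lt_of_le hstep ihm.1⟩
  have hmain := main n le_rfl
  have hWn : W n = v := by funext l; simp [hW, l.isLt]
  rw [hWn] at hmain
  exact hmain.2 k0.isLt

/-- The heat interpretation of an operator `φ` is monotone with
respect to the reflexive closure of the Dershowitz–Manna order: if
`(uₖ, iₖ) ≽ (vₖ, jₖ)` for all `k` (with all `iₖ`, `jₖ` positive), then
`(j₁+⋯+jₙ) • {F(φ(v₁,…,vₙ))}` is equal to, or Dershowitz–Manna smaller than,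
`(i₁+⋯+iₙ) • {F(φ(u₁,…,uₙ))}`. -/
theorem heat_func_monotone (L : Language) (F : L.Term ℕ → ℕ) {n : ℕ}
    (φ : L.Functions n) (u v : Fin n → L.Term ℕ) (i j : Fin n → ℕ)
    (hi : ∀ k, 0 < i k) (hj : ∀ k, 0 < j k)
    (h : ∀ k : Fin n, PairGe F (u k, i k) (v k, j k)) :
    (∑ k, j k) • ({F (Term.func φ v)} : Multiset ℕ)
        = (∑ k, i k) • ({F (Term.func φ u)} : Multiset ℕ) ∨
      IsDershowitzMannaLT
        ((∑ k, j k) • ({F (Term.func φ v)} : Multiset ℕ))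
        ((∑ k, i k) • ({F (Term.func φ u)} : Multiset ℕ)) := by
  by_cases hall : ∀ k, u k = v k
  · -- all components equal: u = v and ∑ j ≤ ∑ i
    have huv : u = v := funext hall
    subst huv
    have hji : ∀ k, j k ≤ i k := by
      intro k
      rcases h k with hgt | ⟨_, hge⟩
      · exact absurd (hgt (Term.var (Sum.inr ())) rfl) (lt_irrefl _)
      · exact hge
    have hsum : ∑ k, j k ≤ ∑ k, i k := Finset.sum_le_sum fun k _ => hji k
    rcases eq_or_lt_of_le hsum with heq | hlt
    · left; rw [heq]
    · right
      refine ⟨(∑ k, j k) • {F (Term.func φ u)},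
        ((∑ k, i k) - (∑ k, j k)) • {F (Term.func φ u)}, 0, ?_, ?_, ?_, ?_⟩
      · rw [Multiset.nsmul_singleton]
        intro hz
        have hc := congrArg Multiset.card hz
        simp at hc
        omega
      · rw [← add_nsmul]
        congr 1
        omega
      · rw [add_zero]
      · simp
  · -- some component strictly decreases
    push_neg at hall
    obtain ⟨k0, hk0ne⟩ := hall
    have hk0 : CtxGt F (u k0) (v k0) := by
      rcases h k0 with hgt | ⟨heq, _⟩
      · exact hgt
      · exact absurd heq hk0ne
    have hcmp : ∀ k, u k = v k ∨ CtxGt F (u k) (v k) := by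
      intro k
      rcases h k with hgt | ⟨heq, _⟩
      · exact Or.inr hgt
      · exact Or.inl heq
    have hF : F (Term.func φ u) > F (Term.func φ v) :=
      ctxGt_chain F φ u v hcmp k0 hk0
    have hipos : 0 < ∑ k, i k :=
      Finset.sum_pos (fun k _ => hi k) ⟨k0, Finset.mem_univ k0⟩
    right
    refine ⟨0, (∑ k, i k) • {F (Term.func φ u)}, (∑ k, j k) • {F (Term.func φ v)},
      ?_, by rw [zero_add], by rw [zero_add], ?_⟩
    · rw [Multiset.nsmul_singleton]
      intro hz
      have hc := congrArg Multiset.card hz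
      simp only [Multiset.card_replicate, Multiset.card_zero] at hc
      omega
    · intro b hb
      refine ⟨F (Term.func φ u), ?_, ?_⟩
      · rw [Multiset.nsmul_singleton]
        exact Multiset.mem_replicate.2 ⟨by omega, rfl⟩
      · rw [Multiset.nsmul_singleton] at hb
        rw [Multiset.eq_of_mem_replicate hb]
        exact hF
end
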